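/- arXiv:2005.02045 — 2 statements merged into one kernel-verified Lean document; each statement's English description precedes it below -/
import Mathlib

section
/- Let X and Y be real Banach spaces, let N be an absolute normalized norm on ℝ², and let γ > 0 be such that N(a,b) ≥ γ(|a| + |b|) for all (a,b) ∈ ℝ². Then 𝒯^cc(X ⊕_N Y) ≥ 2γ(min{𝒯^cc(X), 𝒯^cc(Y)} − 1). -/
open Metric Set

noncomputable section

variable (X : Type*) [NormedAddCommGroup X] [NormedSpace ℝ X]

/-- A subset `U` of `X` is weakly open if it is open in the weak topology of `X`. -/
def IsWeaklyOpen (U : Set X) : Prop := IsOpen (toWeakSpace ℝ X '' U)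

/-- The slice `S(B_X, f, α) = {x ∈ B_X : f x > 1 - α}` of the closed unit ball of `X`. -/
def sliceSet (f : X →L[ℝ] ℝ) (α : ℝ) : Set X :=
  {y ∈ closedBall (0 : X) 1 | 1 - α < f y}

/-- `S` is a slice of the closed unit ball of `X`, i.e. `S = S(B_X, f, α)` for some norm-one
functional `f` and some `α > 0`. -/
def IsSlice (S : Set X) : Prop :=
  ∃ f : X →L[ℝ] ℝ, ‖f‖ = 1 ∧ ∃ α > (0 : ℝ), S = sliceSet X f α

/-- The Daugavet index of thickness `𝒯ˢ(X)`: the infimum of all `r > 0` such that some slice of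
the closed unit ball is contained in a closed ball of radius `r` centered at a point of the unit
sphere. -/
def Ts : ℝ :=
  sInf {r : ℝ | 0 < r ∧ ∃ x : X, ‖x‖ = 1 ∧ ∃ S : Set X, IsSlice X S ∧ S ⊆ closedBall x r}

/-- `W` is a nonempty relatively weakly open subset of the closed unit ball of `X`. -/
def IsRelWeakOpen (W : Set X) : Prop :=
  W.Nonempty ∧ ∃ U : Set X, IsWeaklyOpen X U ∧ W = closedBall (0 : X) 1 ∩ U

/-- The Daugavet index of thickness `𝒯(X)`: the infimum of all `r > 0` such that some nonempty
relatively weakly open subset of the closed unit ball is contained in a closed ball of radius `r`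
centered at a point of the unit sphere. -/
def Tw : ℝ :=
  sInf {r : ℝ | 0 < r ∧ ∃ x : X, ‖x‖ = 1 ∧ ∃ W : Set X, IsRelWeakOpen X W ∧
    W ⊆ closedBall x r}

/-- The convex combination `∑ i, l i • W i` of the sets `W i` (the set of all sums
`∑ i, l i • w i` with `w i ∈ W i`). -/
def comboSet {n : ℕ} (l : Fin n → ℝ) (W : Fin n → Set X) : Set X :=
  {z : X | ∃ w : Fin n → X, (∀ i, w i ∈ W i) ∧ z = ∑ i, l i • w i}

/-- The Daugavet index of thickness `𝒯ᶜᶜ(X)`: the infimum of all `r > 0` such that some convex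
combination of nonempty relatively weakly open subsets of the closed unit ball is contained in a
closed ball of radius `r` centered at a point of the unit sphere. -/
def Tcc : ℝ :=
  sInf {r : ℝ | 0 < r ∧ ∃ x : X, ‖x‖ = 1 ∧ ∃ (n : ℕ) (l : Fin n → ℝ) (W : Fin n → Set X),
    (∀ i, 0 ≤ l i) ∧ (∑ i, l i) = 1 ∧ (∀ i, IsRelWeakOpen X (W i)) ∧
    comboSet X l W ⊆ closedBall x r}

/-- `X` has the Daugavet property: for every `x` in the unit sphere, every `ε > 0` and every
slice `S` of the closed unit ball there exists `y ∈ S` with `‖x - y‖ ≥ 2 - ε`. -/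
def DaugavetProperty : Prop :=
  ∀ x : X, ‖x‖ = 1 → ∀ ε > (0 : ℝ), ∀ S : Set X, IsSlice X S → ∃ y ∈ S, 2 - ε ≤ ‖x - y‖

/-!
Let `C = ∑ λᵢ Wᵢ ⊆ B(z₀, r)` with `‖z₀‖ = 1`. Shrinking a point of `Wᵢ` into the open ball and
splitting it along `e`, one finds `aᵢ, bᵢ ∈ (0, 1]` with `aᵢ + bᵢ ≥ 1` and relatively weakly open
`V¹ᵢ ⊆ B_X`, `V²ᵢ ⊆ B_Y` with `e⁻¹ (aᵢ V¹ᵢ, bᵢ V²ᵢ) ⊆ Wᵢ`; this uses only the weak continuity of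
addition and of the coordinate embeddings. Writing `A = ∑ λᵢ aᵢ`, `B = ∑ λᵢ bᵢ`, the coordinates
of `C` contain `A • ∑ (λᵢ aᵢ / A) V¹ᵢ` and `B • ∑ (λᵢ bᵢ / B) V²ᵢ`, which by definition of `𝒯ᶜᶜ`
contain points almost `𝒯ᶜᶜ(X)`, resp. `𝒯ᶜᶜ(Y)`, away from unit vectors close to the coordinates
`x₀, y₀` of `z₀`. As `A + B ≥ 1` and `‖x₀‖ + ‖y₀‖ ≥ 1`, the two coordinate distances add up to at
least `2 (min (𝒯ᶜᶜ(X)) (𝒯ᶜᶜ(Y)) - 1) - 2ε`, and `N ≥ γ (|a| + |b|)` bounds `r` from below.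
-/

structure IsAbsoluteNormalizedNorm (N : ℝ → ℝ → ℝ) : Prop where
  add_le : ∀ a b c d : ℝ, N (a + c) (b + d) ≤ N a b + N c d
  mul_mul_eq : ∀ t a b : ℝ, N (t * a) (t * b) = |t| * N a b
  eq_abs_abs : ∀ a b : ℝ, N a b = N |a| |b|
  one_zero : N 1 0 = 1
  zero_one : N 0 1 = 1

namespace IsAbsoluteNormalizedNorm

variable {N : ℝ → ℝ → ℝ}

theorem swap (hN : IsAbsoluteNormalizedNorm N) : IsAbsoluteNormalizedNorm fun a b => N b a where
  add_le a b c d := hN.add_le b a d c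
  mul_mul_eq t a b := hN.mul_mul_eq t b a
  eq_abs_abs a b := hN.eq_abs_abs b a
  one_zero := hN.zero_one
  zero_one := hN.one_zero

theorem mul_of_nonneg (hN : IsAbsoluteNormalizedNorm N) {t : ℝ} (ht : 0 ≤ t) (a b : ℝ) :
    N (t * a) (t * b) = t * N a b := by
  rw [hN.mul_mul_eq, abs_of_nonneg ht]

theorem neg_left (hN : IsAbsoluteNormalizedNorm N) (a b : ℝ) : N (-a) b = N a b := by
  rw [hN.eq_abs_abs, abs_neg, ← hN.eq_abs_abs]

theorem apply_zero (hN : IsAbsoluteNormalizedNorm N) {a : ℝ} (ha : 0 ≤ a) : N a 0 = a := by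
  simpa [hN.one_zero] using hN.mul_of_nonneg ha 1 0

theorem zero_apply (hN : IsAbsoluteNormalizedNorm N) {b : ℝ} (hb : 0 ≤ b) : N 0 b = b :=
  hN.swap.apply_zero hb

/-- `N (·, b)` is convex and even, hence monotone on `[0, ∞)`. -/
theorem mono_left (hN : IsAbsoluteNormalizedNorm N) {a a' : ℝ} (b : ℝ) (ha : 0 ≤ a)
    (haa' : a ≤ a') : N a b ≤ N a' b := by
  obtain rfl | ha' := (ha.trans haa').eq_or_lt
  · rw [le_antisymm haa' ha]
  refine le_of_mul_le_mul_left ?_ (by positivity : 0 < 2 * a')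
  calc 2 * a' * N a b = N (2 * a' * a) (2 * a' * b) := (hN.mul_of_nonneg (by positivity) a b).symm
    _ = N ((a' + a) * a' + (a' - a) * -a') ((a' + a) * b + (a' - a) * b) := by
      congr 1 <;> ring
    _ ≤ N ((a' + a) * a') ((a' + a) * b) + N ((a' - a) * -a') ((a' - a) * b) := hN.add_le ..
    _ = 2 * a' * N a' b := by
      rw [hN.mul_of_nonneg (by linarith), hN.mul_of_nonneg (by linarith), hN.neg_left]
      ring

theorem mono (hN : IsAbsoluteNormalizedNorm N) {a a' b b' : ℝ} (ha : 0 ≤ a) (haa' : a ≤ a')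
    (hb : 0 ≤ b) (hbb' : b ≤ b') : N a b ≤ N a' b' :=
  (hN.mono_left b ha haa').trans (hN.swap.mono_left a' hb hbb')

theorem le_apply_left (hN : IsAbsoluteNormalizedNorm N) {a b : ℝ} (ha : 0 ≤ a) (hb : 0 ≤ b) :
    a ≤ N a b := by
  simpa only [hN.apply_zero ha] using hN.swap.mono_left a le_rfl hb

theorem le_apply_right (hN : IsAbsoluteNormalizedNorm N) {a b : ℝ} (ha : 0 ≤ a) (hb : 0 ≤ b) :
    b ≤ N a b :=
  hN.swap.le_apply_left hb ha

theorem apply_le_add (hN : IsAbsoluteNormalizedNorm N) {a b : ℝ} (ha : 0 ≤ a) (hb : 0 ≤ b) :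
    N a b ≤ a + b := by
  simpa [hN.apply_zero ha, hN.zero_apply hb] using hN.add_le a 0 0 b

/-- Spreading the gap `1 - N c d` evenly over both coordinates. -/
theorem exists_ge_of_lt_one (hN : IsAbsoluteNormalizedNorm N) {c d : ℝ} (hc : 0 ≤ c)
    (hd : 0 ≤ d) (h : N c d < 1) :
    ∃ a b : ℝ, c ≤ a ∧ d ≤ b ∧ 0 < a ∧ 0 < b ∧ N a b ≤ 1 ∧ 1 ≤ a + b := by
  set s := 1 - N c d
  have hs0 : 0 < s := by linarith
  refine ⟨c + s / 2, d + s / 2, by linarith, by linarith, by linarith, by linarith, ?_, ?_⟩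
  · calc N (c + s / 2) (d + s / 2) ≤ N c d + N (s / 2) (s / 2) := hN.add_le ..
      _ ≤ N c d + (s / 2 + s / 2) := by
        gcongr
        exact hN.apply_le_add (by positivity) (by positivity)
      _ = 1 := by ring
  · linarith [hN.apply_le_add hc hd]

end IsAbsoluteNormalizedNorm

section WeakTopology

variable {X} {Y : Type*} [NormedAddCommGroup Y] [NormedSpace ℝ Y]

theorem isWeaklyOpen_iff {U : Set X} :
    IsWeaklyOpen X U ↔ IsOpen ((toWeakSpace ℝ X).symm ⁻¹' U) := by
  rw [IsWeaklyOpen, LinearEquiv.image_eq_preimage_symm]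

theorem isWeaklyOpen_univ : IsWeaklyOpen X univ :=
  isWeaklyOpen_iff.2 isOpen_univ

theorem IsWeaklyOpen.isOpen {U : Set X} (hU : IsWeaklyOpen X U) : IsOpen U :=
  WeakSpace.isOpen_of_isOpen (𝕜 := ℝ) U hU

theorem IsWeaklyOpen.preimage (f : X →L[ℝ] Y) {U : Set Y} (hU : IsWeaklyOpen Y U) :
    IsWeaklyOpen X (f ⁻¹' U) :=
  isWeaklyOpen_iff.2 ((WeakSpace.map f).continuous.isOpen_preimage _ (isWeaklyOpen_iff.1 hU))

theorem IsWeaklyOpen.exists_add_mem {U : Set X} (hU : IsWeaklyOpen X U) {p q : X}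
    (h : p + q ∈ U) : ∃ O₁ O₂ : Set X, IsWeaklyOpen X O₁ ∧ IsWeaklyOpen X O₂ ∧ p ∈ O₁ ∧ q ∈ O₂ ∧
      ∀ p' ∈ O₁, ∀ q' ∈ O₂, p' + q' ∈ U := by
  have hadd : IsOpen ((fun s : WeakSpace ℝ X × WeakSpace ℝ X => s.1 + s.2) ⁻¹'
      ((toWeakSpace ℝ X).symm ⁻¹' U)) :=
    continuous_add.isOpen_preimage _ (isWeaklyOpen_iff.1 hU)
  obtain ⟨O₁, O₂, hO₁, hO₂, hp, hq, hsub⟩ :=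
    isOpen_prod_iff.1 hadd (toWeakSpace ℝ X p) (toWeakSpace ℝ X q) h
  exact ⟨O₁, O₂, isWeaklyOpen_iff.2 hO₁, isWeaklyOpen_iff.2 hO₂, hp, hq,
    fun p' hp' q' hq' => hsub (mk_mem_prod hp' hq')⟩

end WeakTopology

section Thickness

variable {X}

theorem comboSet_nonempty {n : ℕ} (l : Fin n → ℝ) {W : Fin n → Set X}
    (hW : ∀ i, (W i).Nonempty) : (comboSet X l W).Nonempty := by
  choose w hw using hW
  exact ⟨_, w, hw, rfl⟩

theorem comboSet_subset_closedBall {n : ℕ} {l : Fin n → ℝ} {W : Fin n → Set X}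
    (hl0 : ∀ i, 0 ≤ l i) (hl1 : ∑ i, l i = 1) (hW : ∀ i, IsRelWeakOpen X (W i)) :
    comboSet X l W ⊆ closedBall 0 1 := by
  rintro _ ⟨w, hw, rfl⟩
  refine (convex_closedBall 0 1).sum_mem (fun i _ => hl0 i) hl1 fun i _ => ?_
  obtain ⟨-, U, -, hWU⟩ := hW i
  exact (hWU ▸ hw i).1

theorem Tcc_le {t : ℝ} (ht : 0 < t) {x : X} (hx : ‖x‖ = 1) {n : ℕ} {l : Fin n → ℝ}
    {W : Fin n → Set X} (hl0 : ∀ i, 0 ≤ l i) (hl1 : ∑ i, l i = 1)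
    (hW : ∀ i, IsRelWeakOpen X (W i)) (hsub : comboSet X l W ⊆ closedBall x t) : Tcc X ≤ t :=
  csInf_le ⟨0, fun _ hr => hr.1.le⟩ ⟨ht, x, hx, n, l, W, hl0, hl1, hW, hsub⟩

theorem le_Tcc [Nontrivial X] {s : ℝ}
    (h : ∀ r > 0, ∀ x : X, ‖x‖ = 1 → ∀ (n : ℕ) (l : Fin n → ℝ) (W : Fin n → Set X),
      (∀ i, 0 ≤ l i) → ∑ i, l i = 1 → (∀ i, IsRelWeakOpen X (W i)) →
      comboSet X l W ⊆ closedBall x r → s ≤ r) : s ≤ Tcc X := by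
  obtain ⟨x, hx⟩ := exists_norm_eq X zero_le_one
  have hW : IsRelWeakOpen X (closedBall 0 1) :=
    ⟨⟨0, mem_closedBall_self zero_le_one⟩, univ, isWeaklyOpen_univ, (inter_univ _).symm⟩
  have hsub : comboSet X (fun _ : Fin 1 => 1) (fun _ => closedBall 0 1) ⊆ closedBall x 2 := by
    intro c hc
    have hc1 := comboSet_subset_closedBall (fun _ => zero_le_one) (by simp) (fun _ => hW) hc
    rw [mem_closedBall_zero_iff] at hc1
    rw [mem_closedBall, dist_eq_norm]
    linarith [norm_sub_le c x]
  refine le_csInf ⟨2, two_pos, x, hx, 1, _, _, fun _ => zero_le_one, by simp, fun _ => hW, hsub⟩ ?_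
  rintro r ⟨hr, x, hx, n, l, W, hl0, hl1, hW, hsub⟩
  exact h r hr x hx n l W hl0 hl1 hW hsub

theorem exists_mem_comboSet_lt_norm_sub {n : ℕ} {l : Fin n → ℝ} {W : Fin n → Set X}
    (hl0 : ∀ i, 0 ≤ l i) (hl1 : ∑ i, l i = 1) (hW : ∀ i, IsRelWeakOpen X (W i))
    {x : X} (hx : ‖x‖ = 1) {ε : ℝ} (hε : 0 < ε) :
    ∃ c ∈ comboSet X l W, Tcc X - ε < ‖c - x‖ := by
  by_contra! hfar
  obtain ⟨c, hc⟩ := comboSet_nonempty l fun i => (hW i).1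
  have hpos : 0 < Tcc X - ε / 2 := by linarith [norm_nonneg (c - x), hfar c hc]
  have := Tcc_le hpos hx hl0 hl1 hW fun c hc => by
    rw [mem_closedBall, dist_eq_norm]
    linarith [hfar c hc]
  linarith

theorem exists_norm_eq_one_norm_sub_le [Nontrivial X] {x : X} (hx : ‖x‖ ≤ 1) :
    ∃ u : X, ‖u‖ = 1 ∧ ‖x - u‖ ≤ 1 - ‖x‖ := by
  rcases eq_or_ne x 0 with rfl | hx0
  · obtain ⟨u, hu⟩ := exists_norm_eq X zero_le_one
    exact ⟨u, hu, by simp [hu]⟩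
  have hpos : 0 < ‖x‖ := norm_pos_iff.2 hx0
  refine ⟨‖x‖⁻¹ • x, by simp [norm_smul, hpos.ne'], le_of_eq ?_⟩
  have hsplit : x - ‖x‖⁻¹ • x = (1 - ‖x‖⁻¹) • x := by rw [sub_smul, one_smul]
  rw [hsplit, norm_smul, Real.norm_eq_abs, abs_of_nonpos]
  · field_simp
    ring
  · linarith [(one_le_inv₀ hpos).2 hx]

theorem exists_mem_comboSet_lt_norm_smul_sub [Nontrivial X] {n : ℕ} {l : Fin n → ℝ}
    {W : Fin n → Set X} (hl0 : ∀ i, 0 ≤ l i) (hl1 : ∑ i, l i = 1)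
    (hW : ∀ i, IsRelWeakOpen X (W i)) {x : X} (hx : ‖x‖ ≤ 1) {A : ℝ}
    (hA1 : A ≤ 1) {ε : ℝ} (hε : 0 < ε) :
    ∃ c ∈ comboSet X l W, Tcc X - ε - (1 - ‖x‖) - (1 - A) < ‖A • c - x‖ := by
  obtain ⟨u, hu, hxu⟩ := exists_norm_eq_one_norm_sub_le hx
  obtain ⟨c, hc, hfar⟩ := exists_mem_comboSet_lt_norm_sub hl0 hl1 hW hu hε
  have hc1 : ‖c‖ ≤ 1 := mem_closedBall_zero_iff.1 (comboSet_subset_closedBall hl0 hl1 hW hc)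
  have hsplit : c - u = (A • c - x) + (x - u) + (1 - A) • c := by
    rw [sub_smul, one_smul]; abel
  have htri : ‖c - u‖ ≤ ‖A • c - x‖ + ‖x - u‖ + (1 - A) * ‖c‖ := by
    have h1A : ‖(1 - A) • c‖ = (1 - A) * ‖c‖ := by
      rw [norm_smul, Real.norm_eq_abs, abs_of_nonneg (sub_nonneg.2 hA1)]
    rw [hsplit, ← h1A]
    exact norm_add₃_le
  have hc1A : (1 - A) * ‖c‖ ≤ 1 - A := mul_le_of_le_one_right (sub_nonneg.2 hA1) hc1
  exact ⟨c, hc, by linarith⟩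

theorem exists_lt_norm_sum_smul_smul_sub [Nontrivial X] {n : ℕ} {l a : Fin n → ℝ}
    (hl0 : ∀ i, 0 ≤ l i) (ha0 : ∀ i, 0 ≤ a i) (hA0 : 0 < ∑ i, l i * a i)
    (hA1 : ∑ i, l i * a i ≤ 1) {V : Fin n → Set X} (hV : ∀ i, IsRelWeakOpen X (V i)) {x : X}
    (hx : ‖x‖ ≤ 1) {ε : ℝ} (hε : 0 < ε) :
    ∃ w : Fin n → X, (∀ i, w i ∈ V i) ∧
      Tcc X - ε - (1 - ‖x‖) - (1 - ∑ i, l i * a i) < ‖∑ i, l i • a i • w i - x‖ := by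
  set A := ∑ i, l i * a i
  have hμ0 : ∀ i, 0 ≤ l i * a i / A := fun i => div_nonneg (mul_nonneg (hl0 i) (ha0 i)) hA0.le
  have hμ1 : ∑ i, l i * a i / A = 1 := by rw [← Finset.sum_div, div_self hA0.ne']
  obtain ⟨_, ⟨w, hw, rfl⟩, hfar⟩ :=
    exists_mem_comboSet_lt_norm_smul_sub hμ0 hμ1 hV hx hA1 hε
  refine ⟨w, hw, ?_⟩
  convert hfar using 3
  rw [Finset.smul_sum]
  refine Finset.sum_congr rfl fun i _ => ?_
  rw [smul_smul, smul_smul, mul_div_cancel₀ _ hA0.ne']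

end Thickness

section AbsoluteSum

variable {X} {Y Z : Type*} [NormedAddCommGroup Y] [NormedSpace ℝ Y] [NormedAddCommGroup Z]
  [NormedSpace ℝ Z] {N : ℝ → ℝ → ℝ}

theorem IsOpen.exists_lt_one_smul_mem {U : Set X} (hU : IsOpen U) {w : X} (hw : w ∈ U) :
    ∃ θ : ℝ, 0 ≤ θ ∧ θ < 1 ∧ θ • w ∈ U := by
  have hlim : Filter.Tendsto (fun t : ℝ => t • w) (nhdsWithin 1 (Iio 1)) (nhds w) := by
    have hcont : Continuous fun t : ℝ => t • w := continuous_id.smul continuous_const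
    simpa using (hcont.tendsto 1).mono_left nhdsWithin_le_nhds
  obtain ⟨θ, hθU, hθ⟩ := ((hlim.eventually (hU.mem_nhds hw)).and
    (Ioo_mem_nhdsLT zero_lt_one)).exists
  exact ⟨θ, hθ.1.le, hθ.2, hθU⟩

theorem norm_symm_apply_of_norm_eq (e : Z ≃ₗ[ℝ] X × Y)
    (hZ : ∀ z : Z, ‖z‖ = N ‖(e z).1‖ ‖(e z).2‖) (p : X × Y) : ‖e.symm p‖ = N ‖p.1‖ ‖p.2‖ := by
  simpa using hZ (e.symm p)

theorem norm_symm_apply_le_of_norm_eq (hN : IsAbsoluteNormalizedNorm N) (e : Z ≃ₗ[ℝ] X × Y)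
    (hZ : ∀ z : Z, ‖z‖ = N ‖(e z).1‖ ‖(e z).2‖) (p : X × Y) : ‖e.symm p‖ ≤ 2 * ‖p‖ := by
  rw [norm_symm_apply_of_norm_eq e hZ]
  linarith [hN.apply_le_add (norm_nonneg p.1) (norm_nonneg p.2), norm_fst_le p, norm_snd_le p]

theorem exists_smul_decomposition (hN : IsAbsoluteNormalizedNorm N) (e : Z ≃ₗ[ℝ] X × Y)
    (hZ : ∀ z : Z, ‖z‖ = N ‖(e z).1‖ ‖(e z).2‖) {z : Z} (hz : ‖z‖ < 1) :
    ∃ a b : ℝ, 0 < a ∧ 0 < b ∧ N a b ≤ 1 ∧ 1 ≤ a + b ∧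
      ∃ (x : X) (y : Y), ‖x‖ ≤ 1 ∧ ‖y‖ ≤ 1 ∧ e.symm (a • x, b • y) = z := by
  obtain ⟨a, b, hua, hvb, ha, hb, hNab, hab⟩ :=
    hN.exists_ge_of_lt_one (norm_nonneg (e z).1) (norm_nonneg (e z).2) (hZ z ▸ hz)
  refine ⟨a, b, ha, hb, hNab, hab, a⁻¹ • (e z).1, b⁻¹ • (e z).2, ?_, ?_, ?_⟩
  · rw [norm_smul, norm_inv, Real.norm_of_nonneg ha.le]
    exact (inv_mul_le_one₀ ha).2 hua
  · rw [norm_smul, norm_inv, Real.norm_of_nonneg hb.le]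
    exact (inv_mul_le_one₀ hb).2 hvb
  · simp [smul_smul, ha.ne', hb.ne']

theorem exists_smul_prod_mem_of_isRelWeakOpen (hN : IsAbsoluteNormalizedNorm N)
    (e : Z ≃ₗ[ℝ] X × Y) (hZ : ∀ z : Z, ‖z‖ = N ‖(e z).1‖ ‖(e z).2‖) {W : Set Z}
    (hW : IsRelWeakOpen Z W) :
    ∃ a b : ℝ, 0 < a ∧ a ≤ 1 ∧ 0 < b ∧ b ≤ 1 ∧ 1 ≤ a + b ∧
      ∃ (V₁ : Set X) (V₂ : Set Y), IsRelWeakOpen X V₁ ∧ IsRelWeakOpen Y V₂ ∧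
        ∀ x ∈ V₁, ∀ y ∈ V₂, e.symm (a • x, b • y) ∈ W := by
  obtain ⟨⟨w, hw⟩, U, hU, rfl⟩ := hW
  obtain ⟨hwB, hwU⟩ := hw
  obtain ⟨θ, hθ0, hθ1, hθU⟩ := hU.isOpen.exists_lt_one_smul_mem hwU
  have hθw : ‖θ • w‖ < 1 := by
    rw [norm_smul, Real.norm_of_nonneg hθ0]
    nlinarith [mem_closedBall_zero_iff.1 hwB, norm_nonneg w]
  obtain ⟨a, b, ha, hb, hNab, hab, x, y, hx, hy, hxy⟩ := exists_smul_decomposition hN e hZ hθw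
  let E : X × Y →L[ℝ] Z :=
    (e.symm : X × Y →ₗ[ℝ] Z).mkContinuous 2 (norm_symm_apply_le_of_norm_eq hN e hZ)
  let J₁ : X →L[ℝ] Z := a • E.comp (ContinuousLinearMap.inl ℝ X Y)
  let J₂ : Y →L[ℝ] Z := b • E.comp (ContinuousLinearMap.inr ℝ X Y)
  have hJ : ∀ x' y', J₁ x' + J₂ y' = e.symm (a • x', b • y') := by
    intro x' y'
    simp [J₁, J₂, E, ← map_smul, ← map_add]
  obtain ⟨O₁, O₂, hO₁, hO₂, hxO, hyO, hadd⟩ :=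
    hU.exists_add_mem (p := J₁ x) (q := J₂ y) (by rwa [hJ, hxy])
  refine ⟨a, b, ha, (hN.le_apply_left ha.le hb.le).trans hNab, hb,
    (hN.le_apply_right ha.le hb.le).trans hNab, hab, closedBall 0 1 ∩ J₁ ⁻¹' O₁,
    closedBall 0 1 ∩ J₂ ⁻¹' O₂, ⟨⟨x, mem_closedBall_zero_iff.2 hx, hxO⟩, _, hO₁.preimage J₁, rfl⟩,
    ⟨⟨y, mem_closedBall_zero_iff.2 hy, hyO⟩, _, hO₂.preimage J₂, rfl⟩, ?_⟩
  rintro x' ⟨hx', hx'O⟩ y' ⟨hy', hy'O⟩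
  refine ⟨?_, hJ x' y' ▸ hadd _ hx'O _ hy'O⟩
  rw [mem_closedBall_zero_iff] at hx' hy' ⊢
  rw [norm_symm_apply_of_norm_eq e hZ, norm_smul, norm_smul, Real.norm_of_nonneg ha.le,
    Real.norm_of_nonneg hb.le]
  exact (hN.mono (by positivity) (mul_le_of_le_one_right ha.le hx') (by positivity)
    (mul_le_of_le_one_right hb.le hy')).trans hNab

theorem two_mul_min_Tcc_sub_one_le [Nontrivial X] [Nontrivial Y]
    (hN : IsAbsoluteNormalizedNorm N) (e : Z ≃ₗ[ℝ] X × Y)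
    (hZ : ∀ z : Z, ‖z‖ = N ‖(e z).1‖ ‖(e z).2‖) {γ : ℝ} (hγ : 0 ≤ γ)
    (hγN : ∀ a b : ℝ, γ * (|a| + |b|) ≤ N a b) {z₀ : Z} (hz₀ : ‖z₀‖ = 1) {n : ℕ}
    {l : Fin n → ℝ} {W : Fin n → Set Z} (hl0 : ∀ i, 0 ≤ l i) (hl1 : ∑ i, l i = 1)
    (hW : ∀ i, IsRelWeakOpen Z (W i)) {r : ℝ} (hsub : comboSet Z l W ⊆ closedBall z₀ r)
    {ε : ℝ} (hε : 0 < ε) : 2 * γ * (min (Tcc X) (Tcc Y) - 1) ≤ r + 2 * γ * ε := by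
  choose a b ha0 ha1 hb0 hb1 hab V₁ V₂ hV₁ hV₂ hmem using
    fun i => exists_smul_prod_mem_of_isRelWeakOpen hN e hZ (hW i)
  obtain ⟨hA0, hA1⟩ : 0 < ∑ i, l i * a i ∧ ∑ i, l i * a i ≤ 1 := by
    simpa using (convex_Ioc (0 : ℝ) 1).sum_mem (fun i _ => hl0 i) hl1 fun i _ => ⟨ha0 i, ha1 i⟩
  obtain ⟨hB0, hB1⟩ : 0 < ∑ i, l i * b i ∧ ∑ i, l i * b i ≤ 1 := by
    simpa using (convex_Ioc (0 : ℝ) 1).sum_mem (fun i _ => hl0 i) hl1 fun i _ => ⟨hb0 i, hb1 i⟩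
  have hAB : 1 ≤ ∑ i, l i * a i + ∑ i, l i * b i := by
    simpa [← Finset.sum_add_distrib, mul_add] using
      (convex_Ici (1 : ℝ)).sum_mem (fun i _ => hl0 i) hl1 fun i _ => hab i
  have hN₀ : N ‖(e z₀).1‖ ‖(e z₀).2‖ = 1 := (hZ z₀).symm.trans hz₀
  have hx₀ := hN₀ ▸ hN.le_apply_left (norm_nonneg (e z₀).1) (norm_nonneg (e z₀).2)
  have hy₀ := hN₀ ▸ hN.le_apply_right (norm_nonneg (e z₀).1) (norm_nonneg (e z₀).2)
  have hxy₀ := hN₀ ▸ hN.apply_le_add (norm_nonneg (e z₀).1) (norm_nonneg (e z₀).2)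
  obtain ⟨wX, hwX, hfarX⟩ :=
    exists_lt_norm_sum_smul_smul_sub hl0 (fun i => (ha0 i).le) hA0 hA1 hV₁ hx₀ hε
  obtain ⟨wY, hwY, hfarY⟩ :=
    exists_lt_norm_sum_smul_smul_sub hl0 (fun i => (hb0 i).le) hB0 hB1 hV₂ hy₀ hε
  have hz : ∑ i, l i • e.symm (a i • wX i, b i • wY i) ∈ comboSet Z l W :=
    ⟨_, fun i => hmem i _ (hwX i) _ (hwY i), rfl⟩
  have hdist := hsub hz
  rw [mem_closedBall, dist_eq_norm, hZ] at hdist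
  simp only [map_sub, map_sum, map_smul, LinearEquiv.apply_symm_apply, Prod.fst_sub,
    Prod.snd_sub, Prod.fst_sum, Prod.snd_sum, Prod.smul_fst, Prod.smul_snd] at hdist
  have hγsum := hγN ‖∑ i, l i • a i • wX i - (e z₀).1‖ ‖∑ i, l i • b i • wY i - (e z₀).2‖
  rw [abs_norm, abs_norm] at hγsum
  have hmin : 2 * (min (Tcc X) (Tcc Y) - ε) - 2 ≤
      ‖∑ i, l i • a i • wX i - (e z₀).1‖ + ‖∑ i, l i • b i • wY i - (e z₀).2‖ := by
    linarith [min_le_left (Tcc X) (Tcc Y), min_le_right (Tcc X) (Tcc Y)]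
  linarith [mul_le_mul_of_nonneg_left hmin hγ]

end AbsoluteSum

theorem stmt_5_general (X Y : Type*) [NormedAddCommGroup X] [NormedSpace ℝ X]
    [Nontrivial X] [NormedAddCommGroup Y] [NormedSpace ℝ Y]
    [Nontrivial Y]
    (N : ℝ → ℝ → ℝ)
    (N_triangle : ∀ a b c d : ℝ, N (a + c) (b + d) ≤ N a b + N c d)
    (N_homog : ∀ t a b : ℝ, N (t * a) (t * b) = |t| * N a b)
    (N_abs : ∀ a b : ℝ, N a b = N |a| |b|)
    (N_norm₁ : N 1 0 = 1) (N_norm₂ : N 0 1 = 1)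
    (Z : Type*) [NormedAddCommGroup Z] [NormedSpace ℝ Z]
    (e : Z ≃ₗ[ℝ] X × Y) (hZ : ∀ z : Z, ‖z‖ = N ‖(e z).1‖ ‖(e z).2‖)
    (γ : ℝ) (hγ : 0 < γ) (hγN : ∀ a b : ℝ, γ * (|a| + |b|) ≤ N a b) :
    2 * γ * (min (Tcc X) (Tcc Y) - 1) ≤ Tcc Z := by
  have hN : IsAbsoluteNormalizedNorm N := ⟨N_triangle, N_homog, N_abs, N_norm₁, N_norm₂⟩
  have : Nontrivial Z := e.toEquiv.nontrivial
  refine le_Tcc fun r _ z₀ hz₀ n l W hl0 hl1 hW hsub => le_of_forall_pos_le_add fun δ hδ => ?_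
  calc 2 * γ * (min (Tcc X) (Tcc Y) - 1) ≤ r + 2 * γ * (δ / (2 * γ)) :=
        two_mul_min_Tcc_sub_one_le hN e hZ hγ.le hγN hz₀ hl0 hl1 hW hsub (by positivity)
    _ = r + δ := by field_simp

theorem stmt_5 (X Y : Type*) [NormedAddCommGroup X] [NormedSpace ℝ X]
    [CompleteSpace X] [Nontrivial X] [NormedAddCommGroup Y] [NormedSpace ℝ Y]
    [CompleteSpace Y] [Nontrivial Y]
    (N : ℝ → ℝ → ℝ)
    (N_triangle : ∀ a b c d : ℝ, N (a + c) (b + d) ≤ N a b + N c d)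
    (N_homog : ∀ t a b : ℝ, N (t * a) (t * b) = |t| * N a b)
    (N_pos : ∀ a b : ℝ, N a b = 0 → a = 0 ∧ b = 0)
    (N_abs : ∀ a b : ℝ, N a b = N |a| |b|)
    (N_norm₁ : N 1 0 = 1) (N_norm₂ : N 0 1 = 1)
    (Z : Type*) [NormedAddCommGroup Z] [NormedSpace ℝ Z] [CompleteSpace Z]
    (e : Z ≃ₗ[ℝ] X × Y) (hZ : ∀ z : Z, ‖z‖ = N ‖(e z).1‖ ‖(e z).2‖)
    (γ : ℝ) (hγ : 0 < γ) (hγN : ∀ a b : ℝ, γ * (|a| + |b|) ≤ N a b) :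
    2 * γ * (min (Tcc X) (Tcc Y) - 1) ≤ Tcc Z :=
  stmt_5_general X Y N N_triangle N_homog N_abs N_norm₁ N_norm₂ Z e hZ γ hγ hγN
end
end

section
/- Let X and Y be real Banach spaces. Then 𝒯^s(X ⊕_1 Y) = min{𝒯^s(X), 𝒯^s(Y)}, where X ⊕_1 Y is the ℓ_1-sum of X and Y. -/
open Metric Set

noncomputable section

variable (X : Type*) [NormedAddCommGroup X] [NormedSpace ℝ X]

/-! The ℓ₁-sum splits every norm-one functional `F` into its restrictions to the two summands, and
`‖F‖` is the larger of their norms, so one of them, say on `X`, has norm one. A slice of `X` for it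
embeds into the slice of `F`, and a ball around `z = (z₁, z₂)` containing the latter yields a ball
of the same radius around `z₁ / ‖z₁‖` containing the former; if `z₁ = 0` the radius is at least
`2 ≥ 𝒯ˢ(X)`. Conversely a slice of `X` in a small ball pulls back along the first projection to a
slice of the sum that stays in a slightly larger ball, since its points have small second
coordinate. Both steps only use that `X` is an L-summand of the sum. -/

section Thickness

variable {E : Type*} [NormedAddCommGroup E] [NormedSpace ℝ E]

lemma sliceSet_mono {f : E →L[ℝ] ℝ} {α β : ℝ} (hαβ : α ≤ β) : sliceSet E f α ⊆ sliceSet E f β :=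
  fun _ hu => ⟨hu.1, by linarith [hu.2]⟩

lemma one_sub_lt_norm_of_mem_sliceSet {f : E →L[ℝ] ℝ} (hf : ‖f‖ ≤ 1) {α : ℝ} {u : E}
    (hu : u ∈ sliceSet E f α) : 1 - α < ‖u‖ :=
  calc 1 - α < f u := hu.2
    _ ≤ ‖f u‖ := Real.le_norm_self _
    _ ≤ ‖f‖ * ‖u‖ := f.le_opNorm u
    _ ≤ ‖u‖ := mul_le_of_le_one_left (norm_nonneg u) hf

lemma exists_norm_le_one_lt_apply {f : E →L[ℝ] ℝ} (hf : ‖f‖ = 1) {δ : ℝ} (hδ : 0 < δ) :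
    ∃ u : E, ‖u‖ ≤ 1 ∧ 1 - δ < f u := by
  obtain ⟨u, hu, hfu⟩ := f.exists_lt_apply_of_lt_opNorm (r := 1 - δ) (by linarith)
  rw [Real.norm_eq_abs] at hfu
  rcases le_total 0 (f u) with h | h
  · exact ⟨u, hu.le, by rwa [abs_of_nonneg h] at hfu⟩
  · exact ⟨-u, by rw [norm_neg]; exact hu.le, by rw [map_neg]; rwa [abs_of_nonpos h] at hfu⟩

lemma sliceSet_subset_closedBall_two (f : E →L[ℝ] ℝ) (α : ℝ) {x : E} (hx : ‖x‖ = 1) :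
    sliceSet E f α ⊆ closedBall x 2 := fun u hu => by
  rw [mem_closedBall, dist_eq_norm]
  linarith [norm_sub_le u x, mem_closedBall_zero_iff.1 hu.1]

lemma Ts_le_of_sliceSet_subset_closedBall {r : ℝ} (hr : 0 < r) {x : E} (hx : ‖x‖ = 1)
    {f : E →L[ℝ] ℝ} (hf : ‖f‖ = 1) {α : ℝ} (hα : 0 < α)
    (hsub : sliceSet E f α ⊆ closedBall x r) : Ts E ≤ r :=
  csInf_le ⟨0, fun _ hs => hs.1.le⟩ ⟨hr, x, hx, _, ⟨f, hf, α, hα, rfl⟩, hsub⟩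

lemma exists_norm_eq_one_opNorm_eq_one [Nontrivial E] :
    ∃ x : E, ‖x‖ = 1 ∧ ∃ f : E →L[ℝ] ℝ, ‖f‖ = 1 := by
  obtain ⟨x, hx⟩ := exists_norm_eq E zero_le_one
  obtain ⟨f, hf, -⟩ := exists_dual_vector ℝ x (by rw [hx]; exact one_ne_zero)
  exact ⟨x, hx, f, hf⟩

lemma Ts_le_two [Nontrivial E] : Ts E ≤ 2 := by
  obtain ⟨x, hx, f, hf⟩ := exists_norm_eq_one_opNorm_eq_one (E := E)
  exact Ts_le_of_sliceSet_subset_closedBall two_pos hx hf one_pos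
    (sliceSet_subset_closedBall_two f 1 hx)

lemma le_Ts [Nontrivial E] {c : ℝ}
    (h : ∀ r > 0, ∀ x : E, ‖x‖ = 1 → ∀ f : E →L[ℝ] ℝ, ‖f‖ = 1 → ∀ α > 0,
      sliceSet E f α ⊆ closedBall x r → c ≤ r) : c ≤ Ts E := by
  obtain ⟨x, hx, f, hf⟩ := exists_norm_eq_one_opNorm_eq_one (E := E)
  refine le_csInf ⟨2, two_pos, x, hx, _, ⟨f, hf, 1, one_pos, rfl⟩,
    sliceSet_subset_closedBall_two f 1 hx⟩ ?_
  rintro r ⟨hr, x, hx, -, ⟨f, hf, α, hα, rfl⟩, hsub⟩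
  exact h r hr x hx f hf α hα hsub

lemma norm_sub_inv_norm_smul_self {x : E} (hx₀ : x ≠ 0) (hx₁ : ‖x‖ ≤ 1) :
    ‖x - ‖x‖⁻¹ • x‖ = 1 - ‖x‖ := by
  have hpos : 0 < ‖x‖ := norm_pos_iff.2 hx₀
  have hinv : 1 ≤ ‖x‖⁻¹ := (one_le_inv₀ hpos).2 hx₁
  rw [show x - ‖x‖⁻¹ • x = (1 - ‖x‖⁻¹) • x by rw [sub_smul, one_smul], norm_smul,
    Real.norm_eq_abs, abs_of_nonpos (by linarith), neg_sub, sub_mul, inv_mul_cancel₀ hpos.ne',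
    one_mul]

/-- Moving the centre `x` to `x / ‖x‖` costs `1 - ‖x‖ = t`; if `x = 0`, the slice forces
`r ≥ 2`. -/
lemma Ts_le_of_forall_mem_sliceSet [Nontrivial E] {f : E →L[ℝ] ℝ} (hf : ‖f‖ = 1) {α : ℝ}
    (hα : 0 < α) {x : E} {t r : ℝ} (ht : 0 ≤ t) (hxt : ‖x‖ + t = 1) (hr : 0 < r)
    (h : ∀ u ∈ sliceSet E f α, ‖u - x‖ + t ≤ r) : Ts E ≤ r := by
  by_cases hx₀ : x = 0
  · subst hx₀
    refine Ts_le_two.trans (le_of_forall_pos_le_add fun ε hε => ?_)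
    obtain ⟨u, hu₁, hfu⟩ := exists_norm_le_one_lt_apply hf (lt_min hε hα)
    have hu : u ∈ sliceSet E f (min ε α) := ⟨mem_closedBall_zero_iff.2 hu₁, hfu⟩
    have := h u (sliceSet_mono (min_le_right ε α) hu)
    rw [norm_zero] at hxt
    rw [sub_zero] at this
    linarith [one_sub_lt_norm_of_mem_sliceSet hf.le hu, min_le_left ε α]
  · have hx : ‖‖x‖⁻¹ • x‖ = 1 := norm_smul_inv_norm hx₀
    refine Ts_le_of_sliceSet_subset_closedBall hr hx hf hα fun u hu => ?_
    rw [mem_closedBall, dist_eq_norm]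
    calc ‖u - ‖x‖⁻¹ • x‖ ≤ ‖u - x‖ + ‖x - ‖x‖⁻¹ • x‖ := norm_sub_le_norm_sub_add_norm_sub _ _ _
      _ = ‖u - x‖ + t := by rw [norm_sub_inv_norm_smul_self hx₀ (by linarith)]; linarith
      _ ≤ r := h u hu

end Thickness

section LSummand

variable {E W : Type*} [NormedAddCommGroup E] [NormedSpace ℝ E]
  [NormedAddCommGroup W] [NormedSpace ℝ W]

/-- `ι ∘ π` is an L-projection of `W` whose range is identified with `E` by `ι`. -/
structure IsLSummand (π : W →L[ℝ] E) (ι : E →L[ℝ] W) : Prop where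
  left_inv : ∀ x, π (ι x) = x
  norm_eq_add : ∀ w, ‖w‖ = ‖π w‖ + ‖w - ι (π w)‖

namespace IsLSummand

variable {π : W →L[ℝ] E} {ι : E →L[ℝ] W}

lemma norm_map (h : IsLSummand π ι) (x : E) : ‖ι x‖ = ‖x‖ := by
  simpa [h.left_inv] using h.norm_eq_add (ι x)

lemma norm_apply_le (h : IsLSummand π ι) (w : W) : ‖π w‖ ≤ ‖w‖ := by
  linarith [h.norm_eq_add w, norm_nonneg (w - ι (π w))]

lemma norm_sub_map (h : IsLSummand π ι) (w : W) (x : E) :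
    ‖w - ι x‖ = ‖π w - x‖ + ‖w - ι (π w)‖ := by
  simpa [h.left_inv] using h.norm_eq_add (w - ι x)

lemma opNorm_comp (h : IsLSummand π ι) (f : E →L[ℝ] ℝ) : ‖f.comp π‖ = ‖f‖ := by
  refine le_antisymm ((f.comp π).opNorm_le_bound (norm_nonneg f) fun w => ?_)
    (f.opNorm_le_bound (norm_nonneg _) fun x => ?_)
  · exact (f.le_opNorm (π w)).trans (by gcongr; exact h.norm_apply_le w)
  · simpa [h.left_inv, h.norm_map] using (f.comp π).le_opNorm (ι x)

lemma opNorm_comp_map_le (h : IsLSummand π ι) (F : W →L[ℝ] ℝ) : ‖F.comp ι‖ ≤ ‖F‖ :=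
  (F.comp ι).opNorm_le_bound (norm_nonneg F) fun x => by
    simpa [h.norm_map] using F.le_opNorm (ι x)

lemma apply_mem_sliceSet (h : IsLSummand π ι) {f : E →L[ℝ] ℝ} {α : ℝ} {w : W}
    (hw : w ∈ sliceSet W (f.comp π) α) : π w ∈ sliceSet E f α :=
  ⟨mem_closedBall_zero_iff.2 ((h.norm_apply_le w).trans (mem_closedBall_zero_iff.1 hw.1)), hw.2⟩

lemma map_mem_sliceSet (h : IsLSummand π ι) {F : W →L[ℝ] ℝ} {α : ℝ} {u : E}
    (hu : u ∈ sliceSet E (F.comp ι) α) : ι u ∈ sliceSet W F α :=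
  ⟨mem_closedBall_zero_iff.2 ((h.norm_map u).trans_le (mem_closedBall_zero_iff.1 hu.1)), hu.2⟩

/-- A slice `S(B_E, f, α)` in `B(x, r)` pulls back to the slice `S(B_W, f ∘ π, β)`, `β ≤ α`, which
lies in `B(ι x, r + β)`: its points `w` have `‖w - ι (π w)‖ = ‖w‖ - ‖π w‖ < β`. -/
lemma Ts_le [Nontrivial E] (h : IsLSummand π ι) : Ts W ≤ Ts E := by
  refine le_Ts fun r hr x hx f hf α hα hsub => le_of_forall_pos_le_add fun ε hε => ?_
  set β := min ε α
  have hβ : 0 < β := lt_min hε hα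
  refine (Ts_le_of_sliceSet_subset_closedBall (add_pos hr hβ) (by rw [h.norm_map, hx])
    (by rw [h.opNorm_comp, hf]) hβ fun w hw => ?_).trans (by linarith [min_le_left ε α])
  have hπw := h.apply_mem_sliceSet hw
  have hdist := mem_closedBall'.1 (hsub (sliceSet_mono (min_le_right ε α) hπw))
  rw [mem_closedBall, dist_eq_norm, h.norm_sub_map, ← dist_eq_norm]
  linarith [h.norm_eq_add w, mem_closedBall_zero_iff.1 hw.1,
    one_sub_lt_norm_of_mem_sliceSet hf.le hπw, dist_comm (π w) x]

lemma Ts_le_of_sliceSet_subset [Nontrivial E] (h : IsLSummand π ι) {F : W →L[ℝ] ℝ}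
    (hF : ‖F.comp ι‖ = 1) {α : ℝ} (hα : 0 < α) {z : W} (hz : ‖z‖ = 1) {r : ℝ} (hr : 0 < r)
    (hsub : sliceSet W F α ⊆ closedBall z r) : Ts E ≤ r := by
  refine Ts_le_of_forall_mem_sliceSet hF hα (norm_nonneg (z - ι (π z)))
    (by rw [← h.norm_eq_add, hz]) hr fun u hu => ?_
  have := mem_closedBall.1 (hsub (h.map_mem_sliceSet hu))
  rwa [dist_comm, dist_eq_norm, h.norm_sub_map, norm_sub_rev] at this

end IsLSummand

end LSummand

section L1Sum

variable (p : ENNReal) (E G : Type*) [NormedAddCommGroup E] [NormedSpace ℝ E]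
  [NormedAddCommGroup G] [NormedSpace ℝ G]

def WithLp.inlL : E →L[ℝ] WithLp p (E × G) :=
  (WithLp.prodContinuousLinearEquiv p ℝ E G).symm.toContinuousLinearMap.comp
    (ContinuousLinearMap.inl ℝ E G)

def WithLp.inrL : G →L[ℝ] WithLp p (E × G) :=
  (WithLp.prodContinuousLinearEquiv p ℝ E G).symm.toContinuousLinearMap.comp
    (ContinuousLinearMap.inr ℝ E G)

@[simp]
lemma WithLp.inlL_apply (x : E) : WithLp.inlL p E G x = WithLp.toLp p (x, 0) := rfl

@[simp]
lemma WithLp.inrL_apply (y : G) : WithLp.inrL p E G y = WithLp.toLp p (0, y) := rfl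

lemma isLSummand_fstL : IsLSummand (WithLp.fstL 1 ℝ E G) (WithLp.inlL 1 E G) where
  left_inv _ := rfl
  norm_eq_add w := by simp [WithLp.prod_norm_eq_of_L1]

lemma isLSummand_sndL : IsLSummand (WithLp.sndL 1 ℝ E G) (WithLp.inrL 1 E G) where
  left_inv _ := rfl
  norm_eq_add w := by simp [WithLp.prod_norm_eq_of_L1, add_comm]

variable {E G}

lemma WithLp.opNorm_eq_max_opNorm_comp_inlL_inrL (F : WithLp 1 (E × G) →L[ℝ] ℝ) :
    ‖F‖ = max ‖F.comp (WithLp.inlL 1 E G)‖ ‖F.comp (WithLp.inrL 1 E G)‖ := by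
  refine le_antisymm (F.opNorm_le_bound (le_max_of_le_left (norm_nonneg _)) fun w => ?_)
    (max_le ?_ ?_)
  · set f := F.comp (WithLp.inlL 1 E G)
    set g := F.comp (WithLp.inrL 1 E G)
    have hw : w = WithLp.inlL 1 E G w.fst + WithLp.inrL 1 E G w.snd :=
      WithLp.ofLp_injective 1 (Prod.ext (by simp) (by simp))
    have hFw : F w = f w.fst + g w.snd := by
      conv_lhs => rw [hw]
      exact map_add F _ _
    calc ‖F w‖ = ‖f w.fst + g w.snd‖ := by rw [hFw]
      _ ≤ ‖f‖ * ‖w.fst‖ + ‖g‖ * ‖w.snd‖ :=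
        (norm_add_le _ _).trans (add_le_add (f.le_opNorm _) (g.le_opNorm _))
      _ ≤ max ‖f‖ ‖g‖ * ‖w.fst‖ + max ‖f‖ ‖g‖ * ‖w.snd‖ := by gcongr <;> simp
      _ = max ‖f‖ ‖g‖ * ‖w‖ := by rw [WithLp.prod_norm_eq_of_L1, mul_add]
  · exact (isLSummand_fstL E G).opNorm_comp_map_le F
  · exact (isLSummand_sndL E G).opNorm_comp_map_le F

end L1Sum

theorem stmt_12_general (X Y : Type*) [NormedAddCommGroup X] [NormedSpace ℝ X]
    [Nontrivial X] [NormedAddCommGroup Y] [NormedSpace ℝ Y]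
    [Nontrivial Y] :
    Ts (WithLp 1 (X × Y)) = min (Ts X) (Ts Y) := by
  refine le_antisymm (le_min (isLSummand_fstL X Y).Ts_le (isLSummand_sndL X Y).Ts_le)
    (le_Ts fun r hr z hz F hF α hα hsub => ?_)
  rcases max_choice ‖F.comp (WithLp.inlL 1 X Y)‖ ‖F.comp (WithLp.inrL 1 X Y)‖ with h | h <;>
    rw [← WithLp.opNorm_eq_max_opNorm_comp_inlL_inrL, hF, eq_comm] at h
  · exact (min_le_left _ _).trans ((isLSummand_fstL X Y).Ts_le_of_sliceSet_subset h hα hz hr hsub)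
  · exact (min_le_right _ _).trans ((isLSummand_sndL X Y).Ts_le_of_sliceSet_subset h hα hz hr hsub)

theorem stmt_12 (X Y : Type*) [NormedAddCommGroup X] [NormedSpace ℝ X]
    [CompleteSpace X] [Nontrivial X] [NormedAddCommGroup Y] [NormedSpace ℝ Y]
    [CompleteSpace Y] [Nontrivial Y] :
    Ts (WithLp 1 (X × Y)) = min (Ts X) (Ts Y) :=
  stmt_12_general X Y
end
end
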